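/- Let m ≥ 1 and C > 0, let P⊥ = I_m − (1/m)·𝟙𝟙ᵀ be the mean-centering projection on ℝ^m, and define LN_C : ℝ^m → ℝ^m by LN_C(x) = P⊥x / max{‖P⊥x‖₂, C}. Then for all x, y ∈ ℝ^m, ‖LN_C(x) − LN_C(y)‖₂ ≤ (2/C)·‖x − y‖₂. -/

import Mathlib

/-- The mean-centering projection `P⊥ = I − (1/m)·𝟙𝟙ᵀ` on `ℝ^m`. -/
noncomputable def meanCenter (m : ℕ) (x : EuclideanSpace ℝ (Fin m)) :
    EuclideanSpace ℝ (Fin m) :=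
  WithLp.toLp 2 (fun i => x i - (∑ j : Fin m, x j) / m)

/-- The LayerNorm map `LN_C(x) = P⊥x / max{‖P⊥x‖₂, C}`. -/
noncomputable def layerNorm (m : ℕ) (C : ℝ) (x : EuclideanSpace ℝ (Fin m)) :
    EuclideanSpace ℝ (Fin m) :=
  (1 / max ‖meanCenter m x‖ C) • meanCenter m x

/-! The Lipschitz constant `2 / C` comes entirely from the clipped normalization
`u ↦ u / max(‖u‖, C)`, which is `(2/C)`-Lipschitz in any real normed space: with
`a = max(‖u‖, C)` and `b = max(‖v‖, C)` one has `a • (u/a − v/b) = (u − v) + (b − a) • (v/b)`,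
where `‖v/b‖ ≤ 1`, `|b − a| ≤ ‖u − v‖` and `a ≥ C`. Mean-centering is an orthogonal projection,
hence does not increase norms, and LayerNorm is the composite of the two. -/

theorem norm_le_norm_add_of_inner_eq_zero {F : Type*} [NormedAddCommGroup F]
    [InnerProductSpace ℝ F] {x y : F} (h : inner ℝ x y = 0) : ‖x‖ ≤ ‖x + y‖ := by
  have hpyth := norm_add_sq_eq_norm_sq_add_norm_sq_real h
  exact (mul_self_le_mul_self_iff (norm_nonneg _) (norm_nonneg _)).2
    (by nlinarith [mul_self_nonneg ‖y‖])

section ClipNormalize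

variable {E : Type*} [NormedAddCommGroup E] [NormedSpace ℝ E] {C : ℝ}

noncomputable def clipNormalize (C : ℝ) (u : E) : E :=
  (1 / max ‖u‖ C) • u

theorem norm_clipNormalize_le_one (hC : 0 < C) (u : E) : ‖clipNormalize C u‖ ≤ 1 := by
  have ha : 0 < max ‖u‖ C := lt_max_of_lt_right hC
  rw [clipNormalize, norm_smul, Real.norm_of_nonneg (by positivity), one_div,
    inv_mul_le_one₀ ha]
  exact le_max_left _ _

theorem max_norm_smul_clipNormalize (hC : 0 < C) (u : E) :
    max ‖u‖ C • clipNormalize C u = u := by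
  have ha : max ‖u‖ C ≠ 0 := (lt_max_of_lt_right hC).ne'
  rw [clipNormalize, smul_smul, mul_one_div_cancel ha, one_smul]

theorem norm_clipNormalize_sub_le (hC : 0 < C) (u v : E) :
    ‖clipNormalize C u - clipNormalize C v‖ ≤ 2 / C * ‖u - v‖ := by
  set a := max ‖u‖ C
  set b := max ‖v‖ C
  have haC : C ≤ a := le_max_right _ _
  have ha : 0 < a := hC.trans_le haC
  have hba : |b - a| ≤ ‖u - v‖ := by
    rw [abs_sub_comm]
    exact (abs_max_sub_max_le_abs _ _ _).trans (abs_norm_sub_norm_le u v)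
  have hdecomp : a • (clipNormalize C u - clipNormalize C v)
      = (u - v) + (b - a) • clipNormalize C v := by
    rw [smul_sub, sub_smul, max_norm_smul_clipNormalize hC, max_norm_smul_clipNormalize hC]
    abel
  have hscaled : a * ‖clipNormalize C u - clipNormalize C v‖ ≤ 2 * ‖u - v‖ := by
    calc a * ‖clipNormalize C u - clipNormalize C v‖
        = ‖(u - v) + (b - a) • clipNormalize C v‖ := by
          rw [← hdecomp, norm_smul, Real.norm_of_nonneg ha.le]
      _ ≤ ‖u - v‖ + |b - a| * 1 := by
          grw [norm_add_le, norm_smul, Real.norm_eq_abs, norm_clipNormalize_le_one hC]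
      _ ≤ 2 * ‖u - v‖ := by linarith
  calc ‖clipNormalize C u - clipNormalize C v‖
      ≤ 2 * ‖u - v‖ / a := by rw [le_div_iff₀ ha, mul_comm]; exact hscaled
    _ ≤ 2 * ‖u - v‖ / C := by gcongr
    _ = 2 / C * ‖u - v‖ := by ring

end ClipNormalize

section MeanCenter

variable {m : ℕ}

theorem meanCenter_sub (x y : EuclideanSpace ℝ (Fin m)) :
    meanCenter m (x - y) = meanCenter m x - meanCenter m y := by
  ext i
  simp only [meanCenter, PiLp.sub_apply, PiLp.toLp_apply, Finset.sum_sub_distrib]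
  ring

theorem meanCenter_add_mean_smul_one (x : EuclideanSpace ℝ (Fin m)) :
    meanCenter m x + ((∑ j, x j) / m) • WithLp.toLp 2 (fun _ => (1 : ℝ)) = x := by
  ext i
  simp [meanCenter]

theorem inner_meanCenter_one (x : EuclideanSpace ℝ (Fin m)) :
    inner ℝ (meanCenter m x) (WithLp.toLp 2 (fun _ => (1 : ℝ))) = 0 := by
  rcases Nat.eq_zero_or_pos m with rfl | hm
  · rw [Subsingleton.elim (meanCenter 0 x) 0, inner_zero_left]
  · have hm' : (m : ℝ) ≠ 0 := by positivity
    simp [meanCenter, EuclideanSpace.inner_eq_star_dotProduct, dotProduct,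
      Finset.sum_sub_distrib, mul_div_cancel₀ _ hm']

theorem norm_meanCenter_le (x : EuclideanSpace ℝ (Fin m)) : ‖meanCenter m x‖ ≤ ‖x‖ := by
  conv_rhs => rw [← meanCenter_add_mean_smul_one x]
  exact norm_le_norm_add_of_inner_eq_zero
    (by rw [inner_smul_right, inner_meanCenter_one, mul_zero])

end MeanCenter

theorem layerNorm_eq_clipNormalize_meanCenter (m : ℕ) (C : ℝ) (x : EuclideanSpace ℝ (Fin m)) :
    layerNorm m C x = clipNormalize C (meanCenter m x) :=
  rfl

theorem layerNorm_lipschitz_general (m : ℕ) (C : ℝ) (hC : 0 < C)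
    (x y : EuclideanSpace ℝ (Fin m)) :
    ‖layerNorm m C x - layerNorm m C y‖ ≤ 2 / C * ‖x - y‖ := by
  calc ‖layerNorm m C x - layerNorm m C y‖
      ≤ 2 / C * ‖meanCenter m x - meanCenter m y‖ := by
        simpa only [layerNorm_eq_clipNormalize_meanCenter] using
          norm_clipNormalize_sub_le hC (meanCenter m x) (meanCenter m y)
    _ ≤ 2 / C * ‖x - y‖ := by
        rw [← meanCenter_sub]
        gcongr
        exact norm_meanCenter_le _

/-- LayerNorm with positive normalizing constant `C` is `(2/C)`-Lipschitz. -/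
theorem layerNorm_lipschitz (m : ℕ) (hm : 1 ≤ m) (C : ℝ) (hC : 0 < C)
    (x y : EuclideanSpace ℝ (Fin m)) :
    ‖layerNorm m C x - layerNorm m C y‖ ≤ 2 / C * ‖x - y‖ :=
  layerNorm_lipschitz_general m C hC x y
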